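/- If two subgroups H and H' of SO(d) are conjugate by an invertible real matrix M (i.e., H' = M H M^{-1}), then they are conjugate by an orthogonal matrix: there exists O in O(d) with H' = O H O^T. -/

import Mathlib

/-! If `G` and `M G M⁻¹` are both orthogonal, then `G` commutes with `MᵀM`, hence with its
positive square root `P`. Writing `M = O P` (polar decomposition, `O` orthogonal), conjugation
by `M` therefore agrees with conjugation by `O` on every such `G`. Only the continuous functional
calculus is needed, so the same holds for units of any star algebra that has one. -/

theorem Units.commute_star_mul_self_of_conj_mem_unitary {A : Type*} [Monoid A] [StarMul A]
    (m : Aˣ) {u : A} (hu : u ∈ unitary A) (hmu : (m : A) * u * ↑m⁻¹ ∈ unitary A) :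
    Commute (star (m : A) * m) u := by
  refine ((commute_unitary_iff_star_left_conjugate hu).2 ?_).symm
  have hm : star (m : A) * star (↑m⁻¹ : A) = 1 := by rw [← star_mul, m.inv_mul, star_one]
  calc star u * (star (m : A) * m) * u
      = star (m : A) * (star ((m : A) * u * ↑m⁻¹) * ((m : A) * u * ↑m⁻¹)) * m := by
        simp only [star_mul, mul_assoc, m.inv_mul, mul_one]
        rw [← mul_assoc (star (m : A)) (star (↑m⁻¹ : A)), hm, one_mul]
    _ = star (m : A) * m := by rw [Unitary.star_mul_self_of_mem hmu, mul_one]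

section Polar

variable {A : Type*} [PartialOrder A] [Ring A] [StarRing A] [TopologicalSpace A]
  [StarOrderedRing A] [Algebra ℝ A] [ContinuousFunctionalCalculus ℝ A IsSelfAdjoint]
  [NonnegSpectrumClass ℝ A] [IsTopologicalRing A] [T2Space A]

theorem Units.exists_eq_unitary_mul_commute_star_mul_self (m : Aˣ) :
    ∃ o ∈ unitary A, ∃ p : Aˣ, (m : A) = o * p ∧
      ∀ b : A, Commute (star (m : A) * m) b → Commute (p : A) b := by
  have ha : 0 ≤ star (m : A) * m := star_mul_self_nonneg _
  obtain ⟨p, hp⟩ : IsUnit (CFC.sqrt (star (m : A) * m)) :=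
    (CFC.isUnit_sqrt_iff _ ha).2 (m.isUnit.star.mul m.isUnit)
  have hpp : (p : A) * p = star (m : A) * m := by rw [hp, CFC.sqrt_mul_sqrt_self _ ha]
  have hp_sa : IsSelfAdjoint (p : A) := hp ▸ (CFC.sqrt_nonneg _).isSelfAdjoint
  have hp_inv : star (↑p⁻¹ : A) = ↑p⁻¹ := by
    refine (Units.inv_eq_of_mul_eq_one_left ?_).symm
    rw [← hp_sa.star_eq, ← star_mul, p.mul_inv, star_one]
  refine ⟨m * ↑p⁻¹, ?_, p, by simp [mul_assoc], fun b hb => hp ▸ hb.cfcₙ_nnreal _⟩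
  refine (m * p⁻¹).isUnit.mem_unitary_of_star_mul_self ?_
  calc star ((m : A) * ↑p⁻¹) * (m * ↑p⁻¹) = ↑p⁻¹ * ((p : A) * p) * ↑p⁻¹ := by
        rw [hpp, star_mul, hp_inv]; simp only [mul_assoc]
    _ = 1 := by simp

theorem Units.exists_mem_unitary_conj_eq (m : Aˣ) :
    ∃ o ∈ unitary A, ∀ u ∈ unitary A, (m : A) * u * ↑m⁻¹ ∈ unitary A →
      (m : A) * u * ↑m⁻¹ = o * u * star o := by
  obtain ⟨o, ho, p, hm, hp⟩ := m.exists_eq_unitary_mul_commute_star_mul_self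
  refine ⟨o, ho, fun u hu hmu => ?_⟩
  have hpu : (p : A) * u * ↑p⁻¹ = u := by
    rw [(hp u (m.commute_star_mul_self_of_conj_mem_unitary hu hmu)).eq, p.mul_inv_cancel_right]
  have hm_inv : (↑m⁻¹ : A) = ↑p⁻¹ * star o := by
    refine Units.inv_eq_of_mul_eq_one_right ?_
    rw [hm, mul_assoc, ← mul_assoc (p : A), p.mul_inv, one_mul, Unitary.mul_star_self_of_mem ho]
  calc (m : A) * u * ↑m⁻¹ = o * ((p : A) * u * ↑p⁻¹) * star o := by
        rw [hm_inv, hm]; simp only [mul_assoc]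
    _ = o * u * star o := by rw [hpu]

end Polar

open Matrix

/-- If two subgroups `H, H'` of `SO(d)` are conjugate by an invertible real
matrix `M` (i.e. `H' = M H M⁻¹`), then they are conjugate by an orthogonal matrix:
there exists `O ∈ O(d)` with `H' = O H Oᵀ`. -/
theorem conjugate_subgroups_of_SO_orthogonally_conjugate
    (d : ℕ) (H H' : Set (Matrix (Fin d) (Fin d) ℝ))
    (hH : ∀ G ∈ H, G ∈ Matrix.orthogonalGroup (Fin d) ℝ ∧ G.det = 1)
    (hH' : ∀ G ∈ H', G ∈ Matrix.orthogonalGroup (Fin d) ℝ ∧ G.det = 1)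
    (M : Matrix (Fin d) (Fin d) ℝ) (hM : IsUnit M)
    (hconj : H' = (fun G => M * G * M⁻¹) '' H) :
    ∃ O ∈ Matrix.orthogonalGroup (Fin d) ℝ, H' = (fun G => O * G * Oᵀ) '' H := by
  obtain ⟨O, hO, hMO⟩ := by
    open scoped MatrixOrder in exact hM.unit.exists_mem_unitary_conj_eq
  refine ⟨O, hO, hconj.trans (Set.image_congr fun G hG => ?_)⟩
  have hMG : M * G * M⁻¹ ∈ H' := hconj ▸ Set.mem_image_of_mem _ hG
  rw [coe_units_inv, hM.unit_spec] at hMO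
  simpa only [star_eq_conjTranspose, conjTranspose_eq_transpose_of_trivial] using
    hMO G (hH G hG).1 (hH' _ hMG).1
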